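/- Let C be a finite-type Cartan matrix of size n. For I ⊆ {1,…,n} with increasing enumeration I = {i_1 < i_2 < … < i_l}, write ϖ_I for the corresponding monomial class in A_C and D_{i_1}, …, D_{i_l} for the equivariant structure-constant matrices. Then for all subsets I, J ⊆ {1,…,n}, in the ring A_C one has ϖ_I · ϖ_J = ∑_{K ⊆ {1,…,n}} [D_{i_1}·D_{i_2}···D_{i_l}]_{(J,K)} · ϖ_K, where [ · ]_{(J,K)} denotes the entry in row J and column K of the indicated product of matrices (for I = ∅ the empty product is the identity matrix). -/

import Mathlib

open Matrix

/-- A finite-type Cartan matrix: an integer square matrix (on a nonempty finite index set) with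
`2`'s on the diagonal, nonpositive off-diagonal entries, which becomes symmetric positive
definite after multiplication by some diagonal matrix with strictly positive diagonal. -/
def IsFiniteCartan {ι : Type*} [Fintype ι] (C : Matrix ι ι ℤ) : Prop :=
  Nonempty ι ∧ (∀ i, C i i = 2) ∧ (∀ i j, i ≠ j → C i j ≤ 0) ∧
    ∃ D : Matrix ι ι ℝ, D.IsDiag ∧ (∀ i, 0 < D i i) ∧
      (D * C.map (Int.cast : ℤ → ℝ)).PosDef

/-- `[C_K⁻¹]_{i,k}`: the `(i,k)`-entry of the inverse of the principal submatrix of `C` (viewed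
as a rational matrix) with rows and columns indexed by `K`, for `i, k ∈ K` (and `0` otherwise). -/
noncomputable def cartanSubInv {n : ℕ} (C : Matrix (Fin n) (Fin n) ℤ) (K : Finset (Fin n))
    (i k : Fin n) : ℚ :=
  if hi : i ∈ K then
    if hk : k ∈ K then
      (((C.map (Int.cast : ℤ → ℚ)).submatrix (Subtype.val : {x // x ∈ K} → Fin n)
          Subtype.val)⁻¹) ⟨i, hi⟩ ⟨k, hk⟩
    else 0
  else 0

theorem posDef_submatrix_inj {ι ι' : Type*} [Fintype ι] [Fintype ι']
    {M : Matrix ι ι ℝ} (hM : M.PosDef) (e : ι' → ι) (he : Function.Injective e) :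
    (M.submatrix e e).PosDef := by
  classical
  refine Matrix.PosDef.of_dotProduct_mulVec_pos (hM.1.submatrix e) fun x hx => ?_
  set y : ι → ℝ := Function.extend e x 0 with hy
  have hye : ∀ i, y (e i) = x i := fun i => he.extend_apply x 0 i
  have key : ∀ g : ι → ℝ, ∑ j, y j * g j = ∑ i, x i * g (e i) := by
    intro g
    have h1 : ∑ j ∈ Finset.univ.image e, y j * g j = ∑ i, y (e i) * g (e i) :=
      Finset.sum_image (fun a _ b _ h => he h)
    have h2 : ∑ j, y j * g j = ∑ j ∈ Finset.univ.image e, y j * g j := by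
      refine (Finset.sum_subset (Finset.subset_univ _) fun j _ hj => ?_).symm
      have hne : ¬∃ i, e i = j := by
        intro ⟨i, hi⟩; exact hj (Finset.mem_image.2 ⟨i, Finset.mem_univ _, hi⟩)
      rw [hy, Function.extend_apply' _ _ _ hne]
      simp
    rw [h2, h1]
    simp [hye]
  have hyx : y ≠ 0 := by
    intro h
    apply hx
    funext i
    have := hye i
    rw [h] at this
    exact this.symm
  have hpos := hM.dotProduct_mulVec_pos hyx
  have heq : dotProduct (star x) ((M.submatrix e e) *ᵥ x) = dotProduct (star y) (M *ᵥ y) := by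
    simp only [star_trivial, dotProduct]
    rw [key]
    congr 1; funext i
    congr 1
    simp only [mulVec, dotProduct, submatrix_apply]
    have := key (fun j => M (e i) j)
    simp only [mul_comm] at this ⊢
    exact this.symm
  rw [heq]; exact hpos

theorem posDef_diag_pos {ι : Type*} [Fintype ι] [DecidableEq ι] {M : Matrix ι ι ℝ}
    (h : M.PosDef) (s : ι) : 0 < M s s := by
  have h0 : (Pi.single s 1 : ι → ℝ) ≠ 0 := by
    intro hzero
    have := congrFun hzero s
    simp at this
  have := h.dotProduct_mulVec_pos h0
  simpa [dotProduct, mulVec, Pi.single_apply, mul_ite, ite_mul,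
    Finset.sum_ite_eq, Finset.sum_ite_eq'] using this

/-- The rational principal submatrix. -/
noncomputable def csubQ {n : ℕ} (C : Matrix (Fin n) (Fin n) ℤ) (K : Finset (Fin n)) :
    Matrix {x // x ∈ K} {x // x ∈ K} ℚ :=
  (C.map (Int.cast : ℤ → ℚ)).submatrix Subtype.val Subtype.val

theorem csub_facts {n : ℕ} {C : Matrix (Fin n) (Fin n) ℤ} (hC : IsFiniteCartan C)
    (K : Finset (Fin n)) :
    IsUnit (csubQ C K).det ∧ ∀ s : {x // x ∈ K}, (csubQ C K)⁻¹ s s ≠ 0 := by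
  classical
  obtain ⟨-, -, -, D, hdiag, hpos, hPD⟩ := hC
  set e : {x // x ∈ K} → Fin n := Subtype.val with he'
  have he : Function.Injective e := Subtype.val_injective
  set Cr : Matrix (Fin n) (Fin n) ℝ := C.map (Int.cast : ℤ → ℝ) with hCr
  have hMK : ((D * Cr).submatrix e e).PosDef := posDef_submatrix_inj hPD e he
  have hprod : (D * Cr).submatrix e e = (D.submatrix e e) * (Cr.submatrix e e) := by
    ext i j
    simp only [submatrix_apply, Matrix.mul_apply]
    rw [Finset.sum_eq_single (e i) (fun c _ hc => by rw [hdiag (Ne.symm hc), zero_mul])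
      (fun h => absurd (Finset.mem_univ _) h)]
    rw [Finset.sum_eq_single i (fun c _ hc => by
      rw [hdiag (show e i ≠ e c from fun hh => hc (he hh).symm), zero_mul])
      (fun h => absurd (Finset.mem_univ _) h)]
  have hcast : Cr.submatrix e e = (csubQ C K).map (Rat.cast : ℚ → ℝ) := by
    ext i j
    simp [csubQ, hCr, Matrix.map_apply]
    rfl
  have hdetMK := hMK.det_pos.ne'
  rw [hprod, det_mul] at hdetMK
  have hdetCr : (Cr.submatrix e e).det ≠ 0 := fun h => hdetMK (by rw [h, mul_zero])
  have hdetQ : (csubQ C K).det ≠ 0 := by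
    intro h
    apply hdetCr
    rw [hcast]
    have h2 : ((csubQ C K).map (Rat.cast : ℚ → ℝ)) = (Rat.castHom ℝ).mapMatrix (csubQ C K) :=
      rfl
    rw [h2, ← RingHom.map_det, h, map_zero]
  have hUnit : IsUnit (csubQ C K).det := hdetQ.isUnit
  refine ⟨hUnit, fun s => ?_⟩
  have hinvCast : (Cr.submatrix e e)⁻¹ = ((csubQ C K)⁻¹).map (Rat.cast : ℚ → ℝ) := by
    apply Matrix.inv_eq_left_inv
    rw [hcast]
    have h3 : ((csubQ C K)⁻¹).map (Rat.cast : ℚ → ℝ) * (csubQ C K).map (Rat.cast : ℚ → ℝ)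
        = ((csubQ C K)⁻¹ * csubQ C K).map (Rat.castHom ℝ) :=
      (Matrix.map_mul (f := Rat.castHom ℝ)).symm
    rw [h3, Matrix.nonsing_inv_mul _ hUnit]
    exact Matrix.map_one _ (map_zero _) (map_one _)
  have hMKinv : (((D * Cr).submatrix e e)⁻¹).PosDef := hMK.inv
  have hBD : (Cr.submatrix e e)⁻¹ = ((D * Cr).submatrix e e)⁻¹ * (D.submatrix e e) := by
    apply Matrix.inv_eq_left_inv
    rw [Matrix.mul_assoc, ← hprod, Matrix.nonsing_inv_mul _ hMK.det_pos.ne'.isUnit]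
  have hentry : (Cr.submatrix e e)⁻¹ s s
      = ((D * Cr).submatrix e e)⁻¹ s s * D (e s) (e s) := by
    rw [hBD, Matrix.mul_apply]
    rw [Finset.sum_eq_single s (fun c _ hc => by
        rw [show (D.submatrix e e) c s = 0 from hdiag (fun hh => hc (he hh)), mul_zero])
      (fun h => absurd (Finset.mem_univ _) h)]
    rfl
  have hpos' : 0 < (Cr.submatrix e e)⁻¹ s s := by
    rw [hentry]
    exact mul_pos (posDef_diag_pos hMKinv s) (hpos _)
  intro h0
  rw [hinvCast] at hpos'
  simp only [Matrix.map_apply, h0] at hpos'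
  rw [Rat.cast_zero] at hpos'
  exact lt_irrefl (0:ℝ) hpos'

theorem cartanSubInv_eq {n : ℕ} (C : Matrix (Fin n) (Fin n) ℤ) {K : Finset (Fin n)}
    {i k : Fin n} (hi : i ∈ K) (hk : k ∈ K) :
    cartanSubInv C K i k = (csubQ C K)⁻¹ ⟨i, hi⟩ ⟨k, hk⟩ := by
  rw [cartanSubInv, dif_pos hi, dif_pos hk]; rfl

theorem cartanF3 {n : ℕ} {C : Matrix (Fin n) (Fin n) ℤ} (hC : IsFiniteCartan C)
    {K : Finset (Fin n)} {s : Fin n} (hs : s ∈ K) : cartanSubInv C K s s ≠ 0 := by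
  rw [cartanSubInv_eq C hs hs]; exact (csub_facts hC K).2 ⟨s, hs⟩

theorem cartanF1 {n : ℕ} {C : Matrix (Fin n) (Fin n) ℤ} (hC : IsFiniteCartan C)
    {K : Finset (Fin n)} {i j : Fin n} (hi : i ∈ K) (hj : j ∈ K) :
    ∑ k ∈ K, cartanSubInv C K i k * (C k j : ℚ) = if i = j then 1 else 0 := by
  have h := Matrix.nonsing_inv_mul (csubQ C K) (csub_facts hC K).1
  have h2 := congrFun (congrFun h ⟨i, hi⟩) ⟨j, hj⟩
  rw [Matrix.mul_apply] at h2
  rw [← Finset.sum_coe_sort K]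
  calc ∑ k : {x // x ∈ K}, cartanSubInv C K i ↑k * (C ↑k j : ℚ)
      = ∑ k : {x // x ∈ K}, (csubQ C K)⁻¹ ⟨i, hi⟩ k * csubQ C K k ⟨j, hj⟩ := by
        refine Finset.sum_congr rfl fun k _ => ?_
        rw [cartanSubInv_eq C hi k.2]
        rfl
    _ = (1 : Matrix {x // x ∈ K} {x // x ∈ K} ℚ) ⟨i, hi⟩ ⟨j, hj⟩ := h2
    _ = if i = j then 1 else 0 := by
        rw [Matrix.one_apply]
        simp [Subtype.ext_iff]

theorem cartanF2 {n : ℕ} {C : Matrix (Fin n) (Fin n) ℤ} (hC : IsFiniteCartan C)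
    {K : Finset (Fin n)} {i j : Fin n} (hi : i ∈ K) (hj : j ∈ K) :
    ∑ k ∈ K, (C i k : ℚ) * cartanSubInv C K k j = if i = j then 1 else 0 := by
  have h := Matrix.mul_nonsing_inv (csubQ C K) (csub_facts hC K).1
  have h2 := congrFun (congrFun h ⟨i, hi⟩) ⟨j, hj⟩
  rw [Matrix.mul_apply] at h2
  rw [← Finset.sum_coe_sort K]
  calc ∑ k : {x // x ∈ K}, (C i ↑k : ℚ) * cartanSubInv C K ↑k j
      = ∑ k : {x // x ∈ K}, csubQ C K ⟨i, hi⟩ k * (csubQ C K)⁻¹ k ⟨j, hj⟩ := by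
        refine Finset.sum_congr rfl fun k _ => ?_
        rw [cartanSubInv_eq C k.2 hj]
        rfl
    _ = (1 : Matrix {x // x ∈ K} {x // x ∈ K} ℚ) ⟨i, hi⟩ ⟨j, hj⟩ := h2
    _ = if i = j then 1 else 0 := by
        rw [Matrix.one_apply]
        simp [Subtype.ext_iff]

theorem cartanKey {n : ℕ} {C : Matrix (Fin n) (Fin n) ℤ} (hC : IsFiniteCartan C)
    {J : Finset (Fin n)} {s i : Fin n} (hs : s ∉ J) (hi : i ∈ J) :
    cartanSubInv C (insert s J) i s / cartanSubInv C (insert s J) s s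
      = -∑ k ∈ J, cartanSubInv C J i k * (C k s : ℚ) := by
  set K := insert s J with hK
  have hsK : s ∈ K := Finset.mem_insert_self s J
  have hJK : ∀ j ∈ J, j ∈ K := fun j hj => Finset.mem_insert_of_mem hj
  have step1 : ∀ j ∈ J, ∑ k ∈ J, (C j k : ℚ) * cartanSubInv C K k s
      = -(C j s : ℚ) * cartanSubInv C K s s := by
    intro j hj
    have h := cartanF2 hC (hJK j hj) hsK
    rw [hK] at h ⊢
    rw [Finset.sum_insert hs, if_neg (by rintro rfl; exact hs hj)] at h
    linarith
  have step2 : cartanSubInv C K i s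
      = -(∑ k ∈ J, cartanSubInv C J i k * (C k s : ℚ)) * cartanSubInv C K s s := by
    have hstart : cartanSubInv C K i s
        = ∑ j ∈ J, (if i = j then (1:ℚ) else 0) * cartanSubInv C K j s := by
      rw [eq_comm]
      simp [ite_mul, Finset.sum_ite_eq, hi]
    rw [hstart]
    calc ∑ j ∈ J, (if i = j then (1:ℚ) else 0) * cartanSubInv C K j s
        = ∑ j ∈ J, (∑ k ∈ J, cartanSubInv C J i k * (C k j : ℚ)) * cartanSubInv C K j s :=
          Finset.sum_congr rfl fun j hj => by rw [cartanF1 hC hi hj]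
      _ = ∑ k ∈ J, cartanSubInv C J i k * ∑ j ∈ J, (C k j : ℚ) * cartanSubInv C K j s := by
          simp only [Finset.sum_mul]
          rw [Finset.sum_comm]
          exact Finset.sum_congr rfl fun k _ => by
            rw [Finset.mul_sum]
            exact Finset.sum_congr rfl fun j _ => mul_assoc _ _ _
      _ = ∑ k ∈ J, cartanSubInv C J i k * (-(C k s : ℚ) * cartanSubInv C K s s) :=
          Finset.sum_congr rfl fun k hk => by rw [step1 k hk]
      _ = ∑ k ∈ J, -(cartanSubInv C J i k * (C k s : ℚ)) * cartanSubInv C K s s :=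
          Finset.sum_congr rfl fun k _ => by ring
      _ = -(∑ k ∈ J, cartanSubInv C J i k * (C k s : ℚ)) * cartanSubInv C K s s := by
          rw [← Finset.sum_mul, ← Finset.sum_neg_distrib]
  rw [step2, mul_div_assoc, div_self (cartanF3 hC hsK), mul_one]

/-- The equivariant structure-constant matrix `D_i`: the `2ⁿ×2ⁿ` matrix over `ℚ[t]`, with rows
and columns indexed by subsets of `{1,…,n}`, whose `(J,K)`-entry is
`[C_K⁻¹]_{i,s}/[C_K⁻¹]_{s,s}` if `i ∈ K`, `|K| = |J|+1` and `K \ J = {s}`;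
is `2t·∑_{k∈K}[C_K⁻¹]_{i,k}` if `i ∈ K` and `K = J`; and is `0` otherwise. -/
noncomputable def Dmat {n : ℕ} (C : Matrix (Fin n) (Fin n) ℤ) (i : Fin n) :
    Matrix (Finset (Fin n)) (Finset (Fin n)) (Polynomial ℚ) :=
  Matrix.of fun J K =>
    if i ∈ K ∧ J ⊆ K ∧ K.card = J.card + 1 then
      Polynomial.C (∑ s ∈ K \ J, cartanSubInv C K i s / cartanSubInv C K s s)
    else if i ∈ K ∧ K = J then
      2 * Polynomial.X * Polynomial.C (∑ k ∈ K, cartanSubInv C K i k)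
    else 0

/-- The ideal `I_C ⊆ ℚ[t][x_1,…,x_n]` generated by the polynomials
`∑_{j=1}^n C_{ij}·x_i·x_j − 2t·x_i`, one for each `i`. -/
noncomputable def petIdeal {n : ℕ} (C : Matrix (Fin n) (Fin n) ℤ) :
    Ideal (MvPolynomial (Fin n) (Polynomial ℚ)) :=
  Ideal.span (Set.range fun i : Fin n =>
    (∑ j : Fin n, MvPolynomial.C ((C i j : Polynomial ℚ)) *
        MvPolynomial.X i * MvPolynomial.X j) -
      MvPolynomial.C (2 * Polynomial.X) * MvPolynomial.X i)

/-- `ϖ_J`: the image in `A_C = ℚ[t][x_1,…,x_n]/I_C` of the monomial `∏_{j∈J} x_j`. -/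
noncomputable def petClass {n : ℕ} (C : Matrix (Fin n) (Fin n) ℤ) (J : Finset (Fin n)) :
    MvPolynomial (Fin n) (Polynomial ℚ) ⧸ petIdeal C :=
  Ideal.Quotient.mk (petIdeal C) (∏ j ∈ J, MvPolynomial.X j)

set_option synthInstance.maxHeartbeats 1000000 in
open MvPolynomial in
theorem petRel {n : ℕ} (C : Matrix (Fin n) (Fin n) ℤ) (J : Finset (Fin n)) {k : Fin n}
    (hk : k ∈ J) :
    ∑ j : Fin n, Ideal.Quotient.mk (petIdeal C) (MvPolynomial.C ((C k j : Polynomial ℚ))) *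
        (Ideal.Quotient.mk (petIdeal C) (MvPolynomial.X j) * petClass C J)
      = Ideal.Quotient.mk (petIdeal C) (MvPolynomial.C (2 * Polynomial.X)) * petClass C J := by
  set m : MvPolynomial (Fin n) (Polynomial ℚ) := ∏ j ∈ J.erase k, MvPolynomial.X j with hm
  have hXk : MvPolynomial.X k * m = ∏ j ∈ J, MvPolynomial.X j := Finset.mul_prod_erase J _ hk
  have h0 : Ideal.Quotient.mk (petIdeal C)
      ((∑ j : Fin n, MvPolynomial.C ((C k j : Polynomial ℚ)) * MvPolynomial.X k *
          MvPolynomial.X j) * m - (MvPolynomial.C (2 * Polynomial.X) * MvPolynomial.X k) * m)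
      = 0 := by
    rw [← sub_mul]
    exact (Ideal.Quotient.eq_zero_iff_mem).2
      (Ideal.mul_mem_right m _ (Ideal.subset_span ⟨k, rfl⟩))
  rw [map_sub, sub_eq_zero] at h0
  calc ∑ j : Fin n, Ideal.Quotient.mk (petIdeal C) (MvPolynomial.C ((C k j : Polynomial ℚ))) *
        (Ideal.Quotient.mk (petIdeal C) (MvPolynomial.X j) * petClass C J)
      = Ideal.Quotient.mk (petIdeal C)
          ((∑ j : Fin n, MvPolynomial.C ((C k j : Polynomial ℚ)) * MvPolynomial.X k *
            MvPolynomial.X j) * m) := by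
        rw [Finset.sum_mul, map_sum]
        refine Finset.sum_congr rfl fun j _ => ?_
        have : MvPolynomial.C ((C k j : Polynomial ℚ)) * MvPolynomial.X k *
            MvPolynomial.X j * m
            = MvPolynomial.C ((C k j : Polynomial ℚ)) *
              (MvPolynomial.X j * (MvPolynomial.X k * m)) := by ring
        rw [this, hXk, _root_.map_mul, _root_.map_mul]
        rfl
    _ = Ideal.Quotient.mk (petIdeal C)
          ((MvPolynomial.C (2 * Polynomial.X) * MvPolynomial.X k) * m) := h0
    _ = Ideal.Quotient.mk (petIdeal C) (MvPolynomial.C (2 * Polynomial.X)) * petClass C J := by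
        rw [mul_assoc, hXk, _root_.map_mul]
        rfl

theorem sum_support_insert {α β : Type*} [DecidableEq α] [Fintype α] [AddCommMonoid β]
    (J : Finset α) (g : Finset α → β)
    (hg : ∀ K, K ≠ J → (∀ s, s ∉ J → K ≠ insert s J) → g K = 0) :
    ∑ K : Finset α, g K = g J + ∑ s ∈ Finset.univ \ J, g (insert s J) := by
  have himg : ∑ s ∈ Finset.univ \ J, g (insert s J)
      = ∑ K ∈ (Finset.univ \ J).image (fun s => insert s J), g K :=
    (Finset.sum_image (fun a ha b hb h => by
      have h2 : a ∈ insert b J := h ▸ Finset.mem_insert_self a J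
      rcases Finset.mem_insert.1 h2 with h' | h'
      · exact h'
      · exact absurd h' (Finset.mem_sdiff.1 ha).2)).symm
  have hJni : J ∉ (Finset.univ \ J).image (fun s => insert s J) := by
    intro h
    obtain ⟨s, hs, hEq⟩ := Finset.mem_image.1 h
    exact (Finset.mem_sdiff.1 hs).2 (hEq ▸ Finset.mem_insert_self s J)
  rw [himg, ← Finset.sum_insert hJni]
  refine (Finset.sum_subset (Finset.subset_univ _) fun K _ hK => ?_).symm
  rw [Finset.mem_insert, Finset.mem_image] at hK
  push_neg at hK
  exact hg K hK.1 fun s hs hEq =>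
    hK.2 s (Finset.mem_sdiff.2 ⟨Finset.mem_univ s, hs⟩) hEq.symm

noncomputable def petQ {n : ℕ} (C : Matrix (Fin n) (Fin n) ℤ) :
    ℚ →+* MvPolynomial (Fin n) (Polynomial ℚ) ⧸ petIdeal C :=
  (Ideal.Quotient.mk (petIdeal C)).comp
    ((MvPolynomial.C : Polynomial ℚ →+* MvPolynomial (Fin n) (Polynomial ℚ)).comp
      (Polynomial.C : ℚ →+* Polynomial ℚ))

theorem petQ_apply {n : ℕ} (C : Matrix (Fin n) (Fin n) ℤ) (r : ℚ) :
    petQ C r = Ideal.Quotient.mk (petIdeal C) (MvPolynomial.C (Polynomial.C r)) := rfl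

theorem petQ_int {n : ℕ} (C : Matrix (Fin n) (Fin n) ℤ) (z : ℤ) :
    Ideal.Quotient.mk (petIdeal C) (MvPolynomial.C ((z : Polynomial ℚ))) = petQ C (z : ℚ) := by
  rw [petQ_apply, map_intCast (Polynomial.C : ℚ →+* Polynomial ℚ) z]

theorem Dmat_self {n : ℕ} (C : Matrix (Fin n) (Fin n) ℤ) (i : Fin n) (J : Finset (Fin n)) :
    Dmat C i J J = if i ∈ J then
      2 * Polynomial.X * Polynomial.C (∑ k ∈ J, cartanSubInv C J i k) else 0 := by
  by_cases h : i ∈ J <;>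
    simp [Dmat, h, (Nat.succ_ne_self J.card).symm]

theorem Dmat_insert {n : ℕ} (C : Matrix (Fin n) (Fin n) ℤ) (i : Fin n) {J : Finset (Fin n)}
    {s : Fin n} (hs : s ∉ J) :
    Dmat C i J (insert s J) = if i ∈ insert s J then
      Polynomial.C (cartanSubInv C (insert s J) i s / cartanSubInv C (insert s J) s s)
    else 0 := by
  have hcard : (insert s J).card = J.card + 1 := Finset.card_insert_of_notMem hs
  have hsd : insert s J \ J = {s} := by
    ext x
    simp only [Finset.mem_sdiff, Finset.mem_insert, Finset.mem_singleton]
    constructor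
    · rintro ⟨h1 | h1, h2⟩
      · exact h1
      · exact absurd h1 h2
    · rintro rfl; exact ⟨Or.inl rfl, hs⟩
  by_cases h : i ∈ insert s J
  · rw [Dmat]
    simp only [Matrix.of_apply]
    rw [if_pos ⟨h, Finset.subset_insert s J, hcard⟩, hsd, Finset.sum_singleton, if_pos h]
  · rw [Dmat]
    simp only [Matrix.of_apply]
    rw [if_neg (fun hc => h hc.1), if_neg (fun hc => h hc.1), if_neg h]

theorem Dmat_zero {n : ℕ} (C : Matrix (Fin n) (Fin n) ℤ) (i : Fin n) (J : Finset (Fin n))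
    (K : Finset (Fin n)) (h1 : K ≠ J) (h2 : ∀ s, s ∉ J → K ≠ insert s J) :
    Dmat C i J K = 0 := by
  rw [Dmat]
  simp only [Matrix.of_apply]
  rw [if_neg, if_neg]
  · rintro ⟨-, hKJ⟩; exact h1 hKJ
  · rintro ⟨hiK, hJK, hcard⟩
    have hcd : (K \ J).card = 1 := by rw [Finset.card_sdiff_of_subset hJK, hcard]; simp
    obtain ⟨s, hs⟩ := Finset.card_eq_one.1 hcd
    have hsKJ : s ∈ K \ J := hs ▸ Finset.mem_singleton_self s
    have hsK : s ∈ K := (Finset.mem_sdiff.1 hsKJ).1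
    have hsJ : s ∉ J := (Finset.mem_sdiff.1 hsKJ).2
    refine h2 s hsJ (Finset.Subset.antisymm ?_ (Finset.insert_subset hsK hJK))
    intro x hx
    by_contra hxi
    rw [Finset.mem_insert] at hxi
    push_neg at hxi
    have hxKJ : x ∈ K \ J := Finset.mem_sdiff.2 ⟨hx, hxi.2⟩
    rw [hs, Finset.mem_singleton] at hxKJ
    exact hxi.1 hxKJ

set_option synthInstance.maxHeartbeats 1000000 in
set_option maxHeartbeats 1000000 in
open MvPolynomial in
theorem petStep {n : ℕ} {C : Matrix (Fin n) (Fin n) ℤ} (hC : IsFiniteCartan C)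
    (i : Fin n) (J : Finset (Fin n)) :
    Ideal.Quotient.mk (petIdeal C) (MvPolynomial.X i) * petClass C J
      = ∑ K : Finset (Fin n),
          Ideal.Quotient.mk (petIdeal C) (MvPolynomial.C (Dmat C i J K)) * petClass C K := by
  classical
  set mkh := Ideal.Quotient.mk (petIdeal C) with hmkh
  have hred : ∑ K : Finset (Fin n), mkh (MvPolynomial.C (Dmat C i J K)) * petClass C K
      = mkh (MvPolynomial.C (Dmat C i J J)) * petClass C J
        + ∑ s ∈ Finset.univ \ J,
            mkh (MvPolynomial.C (Dmat C i J (insert s J))) * petClass C (insert s J) := by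
    exact sum_support_insert J _ fun K h1 h2 => by
      rw [Dmat_zero C i J K h1 h2, map_zero, map_zero]
      ring
  rw [hred]
  by_cases hiJ : i ∈ J
  · -- main case
    -- the diagonal entry
    have hdiag : mkh (MvPolynomial.C (Dmat C i J J)) * petClass C J
        = petQ C (∑ k ∈ J, cartanSubInv C J i k) *
            (mkh (MvPolynomial.C (2 * Polynomial.X)) * petClass C J) := by
      rw [Dmat_self, if_pos hiJ]
      have : (MvPolynomial.C (2 * Polynomial.X * Polynomial.C (∑ k ∈ J, cartanSubInv C J i k)) :
            MvPolynomial (Fin n) (Polynomial ℚ))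
          = MvPolynomial.C ((2 : Polynomial ℚ) * Polynomial.X) *
            MvPolynomial.C (Polynomial.C (∑ k ∈ J, cartanSubInv C J i k)) := by
        rw [← _root_.map_mul]
      rw [this, _root_.map_mul, petQ_apply]
      ring
    -- the off-diagonal entries
    have hoff : ∀ s ∈ Finset.univ \ J,
        mkh (MvPolynomial.C (Dmat C i J (insert s J))) * petClass C (insert s J)
          = petQ C (cartanSubInv C (insert s J) i s / cartanSubInv C (insert s J) s s) *
              (mkh (MvPolynomial.X s) * petClass C J) := by
      intro s hs
      have hsJ : s ∉ J := (Finset.mem_sdiff.1 hs).2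
      rw [Dmat_insert C i hsJ, if_pos (Finset.mem_insert_of_mem hiJ), petQ_apply]
      have : mkh (MvPolynomial.X s) * petClass C J = petClass C (insert s J) := by
        rw [petClass, petClass, Finset.prod_insert hsJ, _root_.map_mul]
      rw [this]
    -- relations
    have step_a : ∀ k ∈ J, ∑ j ∈ J, petQ C ((C k j : ℚ)) * (mkh (MvPolynomial.X j) * petClass C J)
        = mkh (MvPolynomial.C (2 * Polynomial.X)) * petClass C J
          - ∑ j ∈ Finset.univ \ J, petQ C ((C k j : ℚ)) * (mkh (MvPolynomial.X j) * petClass C J) := by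
      intro k hk
      have h' := petRel C J hk
      have hconv : ∀ j : Fin n, mkh (MvPolynomial.C ((C k j : Polynomial ℚ))) = petQ C ((C k j : ℚ)) :=
        fun j => petQ_int C _
      simp only [hmkh] at hconv
      simp only [hconv] at h'
      rw [eq_sub_iff_add_eq]
      rw [← Finset.sum_sdiff (Finset.subset_univ J)] at h'
      rw [add_comm]
      exact h'
    -- solve the system
    have hyi : mkh (MvPolynomial.X i) * petClass C J
        = ∑ k ∈ J, petQ C (cartanSubInv C J i k) *
            (mkh (MvPolynomial.C (2 * Polynomial.X)) * petClass C J
              - ∑ j ∈ Finset.univ \ J, petQ C ((C k j : ℚ)) *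
                  (mkh (MvPolynomial.X j) * petClass C J)) := by
      calc mkh (MvPolynomial.X i) * petClass C J
          = ∑ j ∈ J, petQ C (if i = j then (1:ℚ) else 0) *
              (mkh (MvPolynomial.X j) * petClass C J) := by
            rw [eq_comm]
            have hterm : ∀ j, petQ C (if i = j then (1:ℚ) else 0) *
                (mkh (MvPolynomial.X j) * petClass C J)
                = if i = j then mkh (MvPolynomial.X j) * petClass C J else 0 := fun j => by
              split <;> simp <;> ring
            rw [Finset.sum_congr rfl fun j _ => hterm j, Finset.sum_ite_eq J i
              (fun j => mkh (MvPolynomial.X j) * petClass C J), if_pos hiJ]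
        _ = ∑ j ∈ J, petQ C (∑ k ∈ J, cartanSubInv C J i k * (C k j : ℚ)) *
              (mkh (MvPolynomial.X j) * petClass C J) :=
            Finset.sum_congr rfl fun j hj => by rw [cartanF1 hC hiJ hj]
        _ = ∑ k ∈ J, petQ C (cartanSubInv C J i k) *
              ∑ j ∈ J, petQ C ((C k j : ℚ)) * (mkh (MvPolynomial.X j) * petClass C J) := by
            simp only [map_sum, _root_.map_mul, Finset.sum_mul, Finset.mul_sum]
            rw [Finset.sum_comm]
            exact Finset.sum_congr rfl fun k _ => Finset.sum_congr rfl fun j _ => by ring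
        _ = _ := Finset.sum_congr rfl fun k hk => by rw [step_a k hk]
    have hexp : ∑ k ∈ J, petQ C (cartanSubInv C J i k) *
        (mkh (MvPolynomial.C (2 * Polynomial.X)) * petClass C J
          - ∑ j ∈ Finset.univ \ J, petQ C ((C k j : ℚ)) *
              (mkh (MvPolynomial.X j) * petClass C J))
        = petQ C (∑ k ∈ J, cartanSubInv C J i k) *
            (mkh (MvPolynomial.C (2 * Polynomial.X)) * petClass C J)
          - ∑ j ∈ Finset.univ \ J, petQ C (∑ k ∈ J, cartanSubInv C J i k * (C k j : ℚ)) *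
              (mkh (MvPolynomial.X j) * petClass C J) := by
      calc ∑ k ∈ J, petQ C (cartanSubInv C J i k) *
            (mkh (MvPolynomial.C (2 * Polynomial.X)) * petClass C J
              - ∑ j ∈ Finset.univ \ J, petQ C ((C k j : ℚ)) *
                  (mkh (MvPolynomial.X j) * petClass C J))
          = ∑ k ∈ J, (petQ C (cartanSubInv C J i k) *
                (mkh (MvPolynomial.C (2 * Polynomial.X)) * petClass C J)
              - petQ C (cartanSubInv C J i k) *
                ∑ j ∈ Finset.univ \ J, petQ C ((C k j : ℚ)) *
                  (mkh (MvPolynomial.X j) * petClass C J)) :=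
            Finset.sum_congr rfl fun k _ => by ring
        _ = (∑ k ∈ J, petQ C (cartanSubInv C J i k) *
                (mkh (MvPolynomial.C (2 * Polynomial.X)) * petClass C J))
            - ∑ k ∈ J, petQ C (cartanSubInv C J i k) *
                ∑ j ∈ Finset.univ \ J, petQ C ((C k j : ℚ)) *
                  (mkh (MvPolynomial.X j) * petClass C J) := Finset.sum_sub_distrib _ _
        _ = petQ C (∑ k ∈ J, cartanSubInv C J i k) *
              (mkh (MvPolynomial.C (2 * Polynomial.X)) * petClass C J)
            - ∑ j ∈ Finset.univ \ J, petQ C (∑ k ∈ J, cartanSubInv C J i k * (C k j : ℚ)) *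
                (mkh (MvPolynomial.X j) * petClass C J) := by
            congr 1
            · rw [map_sum, Finset.sum_mul]
            · simp only [Finset.mul_sum]
              rw [Finset.sum_comm]
              refine Finset.sum_congr rfl fun j _ => ?_
              rw [map_sum, Finset.sum_mul]
              exact Finset.sum_congr rfl fun k _ => by
                rw [_root_.map_mul]; ring
    rw [hyi]
    rw [hexp]
    rw [hdiag]
    rw [Finset.sum_congr rfl hoff]
    rw [sub_eq_add_neg]
    congr 1
    rw [← Finset.sum_neg_distrib]
    refine Finset.sum_congr rfl fun j hj => ?_
    have hjJ : j ∉ J := (Finset.mem_sdiff.1 hj).2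
    have hkey := cartanKey hC hjJ hiJ
    rw [hkey, map_neg]
    ring
  · -- case i ∉ J
    have hdiag0 : mkh (MvPolynomial.C (Dmat C i J J)) * petClass C J = 0 := by
      rw [Dmat_self, if_neg hiJ, map_zero, map_zero]
      ring
    have hoff0 : ∀ s ∈ Finset.univ \ J, s ≠ i →
        mkh (MvPolynomial.C (Dmat C i J (insert s J))) * petClass C (insert s J) = 0 := by
      intro s hs hsi
      have hsJ : s ∉ J := (Finset.mem_sdiff.1 hs).2
      have hnot : i ∉ insert s J := by
        rw [Finset.mem_insert]
        push_neg
        exact ⟨fun h => hsi h.symm, hiJ⟩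
      rw [Dmat_insert C i hsJ, if_neg hnot, map_zero, map_zero]
      ring
    have hiU : i ∈ Finset.univ \ J := Finset.mem_sdiff.2 ⟨Finset.mem_univ i, hiJ⟩
    rw [Finset.sum_eq_single_of_mem i hiU (fun s hs hsi => hoff0 s hs hsi), hdiag0, zero_add]
    rw [Dmat_insert C i hiJ, if_pos (Finset.mem_insert_self i J),
      div_self (cartanF3 hC (Finset.mem_insert_self i J)), Polynomial.C_1, MvPolynomial.C_1,
      _root_.map_one]
    rw [petClass, petClass, Finset.prod_insert hiJ, _root_.map_mul]
    ring

set_option synthInstance.maxHeartbeats 1000000 in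
set_option maxHeartbeats 1000000 in
open MvPolynomial in
theorem petList {n : ℕ} {C : Matrix (Fin n) (Fin n) ℤ} (hC : IsFiniteCartan C)
    (l : List (Fin n)) (J : Finset (Fin n)) :
    Ideal.Quotient.mk (petIdeal C) (l.map MvPolynomial.X).prod * petClass C J
      = ∑ K : Finset (Fin n),
          Ideal.Quotient.mk (petIdeal C) (MvPolynomial.C ((l.map (Dmat C)).prod J K)) *
            petClass C K := by
  classical
  set mkh := Ideal.Quotient.mk (petIdeal C) with hmkh
  induction l generalizing J with
  | nil =>
    simp only [List.map_nil, List.prod_nil, _root_.map_one]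
    have hterm : ∀ K : Finset (Fin n),
        mkh (MvPolynomial.C ((1 : Matrix (Finset (Fin n)) (Finset (Fin n)) (Polynomial ℚ)) J K)) *
          petClass C K = if J = K then petClass C K else 0 := by
      intro K
      rw [Matrix.one_apply]
      split
      · rw [_root_.map_one, _root_.map_one]; ring
      · rw [map_zero, map_zero]; ring
    rw [Finset.sum_congr rfl fun K _ => hterm K, Finset.sum_ite_eq Finset.univ J
      (fun K => petClass C K), if_pos (Finset.mem_univ J)]
    ring
  | cons i l ih =>
    simp only [List.map_cons, List.prod_cons]
    calc mkh (MvPolynomial.X i * (l.map MvPolynomial.X).prod) * petClass C J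
        = mkh ((l.map MvPolynomial.X).prod) * (mkh (MvPolynomial.X i) * petClass C J) := by
          rw [_root_.map_mul]; ring
      _ = mkh ((l.map MvPolynomial.X).prod) *
            ∑ L : Finset (Fin n), mkh (MvPolynomial.C (Dmat C i J L)) * petClass C L := by
          rw [petStep hC i J]
      _ = ∑ L : Finset (Fin n), mkh (MvPolynomial.C (Dmat C i J L)) *
            (mkh ((l.map MvPolynomial.X).prod) * petClass C L) := by
          rw [Finset.mul_sum]
          exact Finset.sum_congr rfl fun L _ => by ring
      _ = ∑ L : Finset (Fin n), mkh (MvPolynomial.C (Dmat C i J L)) *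
            ∑ K : Finset (Fin n), mkh (MvPolynomial.C ((l.map (Dmat C)).prod L K)) *
              petClass C K :=
          Finset.sum_congr rfl fun L _ => by rw [ih L]
      _ = ∑ K : Finset (Fin n),
            mkh (MvPolynomial.C ((Dmat C i * (l.map (Dmat C)).prod) J K)) * petClass C K := by
          simp only [Finset.mul_sum]
          rw [Finset.sum_comm]
          refine Finset.sum_congr rfl fun K _ => ?_
          rw [Matrix.mul_apply, map_sum, map_sum, Finset.sum_mul]
          exact Finset.sum_congr rfl fun L _ => by
            rw [_root_.map_mul, _root_.map_mul]; ring

/-- in the ring `A_C`, for all subsets `I, J ⊆ {1,…,n}`, with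
`I = {i_1 < … < i_l}` in increasing order, one has
`ϖ_I · ϖ_J = ∑_{K} [D_{i_1}·D_{i_2}···D_{i_l}]_{(J,K)} · ϖ_K` (for `I = ∅` the empty product of
matrices is the identity matrix). -/
theorem peterson_structure_constants_equivariant {n : ℕ}
    (C : Matrix (Fin n) (Fin n) ℤ) (hC : IsFiniteCartan C)
    (I J : Finset (Fin n)) :
    petClass C I * petClass C J =
      ∑ K : Finset (Fin n),
        Ideal.Quotient.mk (petIdeal C)
          (MvPolynomial.C (((I.sort (· ≤ ·)).map (Dmat C)).prod J K)) * petClass C K := by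
  have hprod : (∏ j ∈ I, (MvPolynomial.X j : MvPolynomial (Fin n) (Polynomial ℚ)))
      = ((I.sort (· ≤ ·)).map MvPolynomial.X).prod := by
    rw [Finset.prod_eq_multiset_prod, ← Finset.sort_eq (s := I) (r := (· ≤ ·)), Multiset.map_coe,
      Multiset.prod_coe]
  rw [petClass, hprod]
  exact petList hC (I.sort (· ≤ ·)) J
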